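/- Let R be a social ranking solution satisfying neutrality (NT), concatenation consistency (CCON), and all indifference all winners (AIAW). Then R satisfies independence of the decomposition of the worst sets (IDWS) if and only if R equals the S lex-cel solution R^SL. -/

import Mathlib

namespace SocRank

/-- A coalitional ranking (a weak order on a set of feasible nonempty coalitions),
represented by its list of equivalence classes, listed from best to worst. -/
structure CoalRanking (X : Type*) where
  classes : List (Finset (Finset X))
  class_nonempty : ∀ C ∈ classes, C.Nonempty
  coal_nonempty : ∀ C ∈ classes, ∀ S ∈ C, S.Nonempty
  classes_disjoint : classes.Pairwise Disjoint

namespace CoalRanking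

variable {X : Type*}

/-- The coalition domain `𝒟(≿)` of a coalitional ranking. -/
def domain [DecidableEq X] (r : CoalRanking X) : Finset (Finset X) :=
  r.classes.foldr (· ∪ ·) ∅

/-- The list of equivalence classes of the restriction of a ranking to a set `D`
of coalitions. -/
def restrictClasses [DecidableEq X] (r : CoalRanking X) (D : Finset (Finset X)) :
    List (Finset (Finset X)) :=
  (r.classes.map (· ∩ D)).filter (fun C => decide C.Nonempty)

/-- Merging two lists of equivalence classes by aligning them at the top. -/
def zipUnion [DecidableEq X] :
    List (Finset (Finset X)) → List (Finset (Finset X)) → List (Finset (Finset X))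
  | [], M => M
  | L, [] => L
  | A :: L, B :: M => (A ∪ B) :: zipUnion L M

/-- `r` is a sum of the disjoint rankings `r₁` and `r₂`: its domain is the union of
the two domains and its restriction to the domain of `rᵢ` is `rᵢ`. -/
def IsSum [DecidableEq X] (r r₁ r₂ : CoalRanking X) : Prop :=
  Disjoint r₁.domain r₂.domain ∧
  r.domain = r₁.domain ∪ r₂.domain ∧
  r.restrictClasses r₁.domain = r₁.classes ∧
  r.restrictClasses r₂.domain = r₂.classes

/-- `r` is the concatenation sum `r₁ · r₂` of the disjoint rankings `r₁` and `r₂`. -/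
def IsConcatSum [DecidableEq X] (r r₁ r₂ : CoalRanking X) : Prop :=
  Disjoint r₁.domain r₂.domain ∧ r.classes = r₁.classes ++ r₂.classes

/-- `r` is the top-aligned sum `r₁ ⊨ r₂` of the disjoint rankings `r₁` and `r₂`. -/
def IsTopAlignedSum [DecidableEq X] (r r₁ r₂ : CoalRanking X) : Prop :=
  Disjoint r₁.domain r₂.domain ∧ r.classes = zipUnion r₁.classes r₂.classes

/-- `r` is the bottom-aligned sum `r₁ ⫤ r₂` of the disjoint rankings `r₁` and `r₂`. -/
def IsBottomAlignedSum [DecidableEq X] (r r₁ r₂ : CoalRanking X) : Prop :=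
  Disjoint r₁.domain r₂.domain ∧
  r.classes = (zipUnion r₁.classes.reverse r₂.classes.reverse).reverse

/-- Renaming the individuals of a coalitional ranking by a permutation `σ` of `X`:
the ranking `≿^σ`. -/
def mapPerm [DecidableEq X] (σ : Equiv.Perm X) (r : CoalRanking X) : CoalRanking X where
  classes := r.classes.map (fun C => C.image (fun S => S.image σ))
  class_nonempty := by
    intro C hC
    simp only [List.mem_map] at hC
    obtain ⟨C₀, hC₀, rfl⟩ := hC
    exact (r.class_nonempty C₀ hC₀).image _
  coal_nonempty := by
    intro C hC S hS
    simp only [List.mem_map] at hC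
    obtain ⟨C₀, hC₀, rfl⟩ := hC
    simp only [Finset.mem_image] at hS
    obtain ⟨S₀, hS₀, rfl⟩ := hS
    exact (r.coal_nonempty C₀ hC₀ S₀ hS₀).image _
  classes_disjoint := by
    refine List.Pairwise.map _ (fun {A B} h => ?_) r.classes_disjoint
    exact (Finset.disjoint_image
      (Finset.image_injective σ.injective)).mpr h

/-- Renaming the coalitions of a coalitional ranking by a permutation `π` of the set of
coalitions (mapping nonempty sets to nonempty sets): the ranking `≿_π`. -/
def mapCoalPerm [DecidableEq X] (π : Equiv.Perm (Finset X))
    (hπ : ∀ S : Finset X, S.Nonempty → (π S).Nonempty) (r : CoalRanking X) :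
    CoalRanking X where
  classes := r.classes.map (fun C => C.image π)
  class_nonempty := by
    intro C hC
    simp only [List.mem_map] at hC
    obtain ⟨C₀, hC₀, rfl⟩ := hC
    exact (r.class_nonempty C₀ hC₀).image _
  coal_nonempty := by
    intro C hC S hS
    simp only [List.mem_map] at hC
    obtain ⟨C₀, hC₀, rfl⟩ := hC
    simp only [Finset.mem_image] at hS
    obtain ⟨S₀, hS₀, rfl⟩ := hS
    exact hπ S₀ (r.coal_nonempty C₀ hC₀ S₀ hS₀)
  classes_disjoint := by
    refine List.Pairwise.map _ (fun {A B} h => ?_) r.classes_disjoint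
    exact (Finset.disjoint_image π.injective).mpr h

end CoalRanking

open CoalRanking

variable {X : Type*}

/-- A social ranking solution: a map assigning to every coalitional ranking a binary
relation on the individuals. -/
abbrev SRSMap (X : Type*) := CoalRanking X → X → X → Prop

/-- The symmetric part `I` of the social ranking. -/
def Ind (R : SRSMap X) (r : CoalRanking X) (x y : X) : Prop := R r x y ∧ R r y x

/-- The asymmetric part `P` of the social ranking. -/
def Pref (R : SRSMap X) (r : CoalRanking X) (x y : X) : Prop := R r x y ∧ ¬ R r y x

/-- Conditions (1)-(4) of consistency for the triple `(r₁, r₂, r)`. -/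
def ConsistentAt (R : SRSMap X) (r₁ r₂ r : CoalRanking X) : Prop :=
  ∀ x y : X,
    (Ind R r₁ x y → Ind R r₂ x y → Ind R r x y) ∧
    (Ind R r₁ x y → Pref R r₂ x y → Pref R r x y) ∧
    (Pref R r₁ x y → Ind R r₂ x y → Pref R r x y) ∧
    (Pref R r₁ x y → Pref R r₂ x y → Pref R r x y)

/-- Consistency (CON). -/
def CON [DecidableEq X] (R : SRSMap X) : Prop :=
  ∀ r₁ r₂ r : CoalRanking X, IsSum r r₁ r₂ → ConsistentAt R r₁ r₂ r

/-- Concatenation consistency (CCON). -/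
def CCON [DecidableEq X] (R : SRSMap X) : Prop :=
  ∀ r₁ r₂ r : CoalRanking X, IsConcatSum r r₁ r₂ → ConsistentAt R r₁ r₂ r

/-- Top-aligned consistency (TCON). -/
def TCON [DecidableEq X] (R : SRSMap X) : Prop :=
  ∀ r₁ r₂ r : CoalRanking X, IsTopAlignedSum r r₁ r₂ → ConsistentAt R r₁ r₂ r

/-- Bottom-aligned consistency (BCON). -/
def BCON [DecidableEq X] (R : SRSMap X) : Prop :=
  ∀ r₁ r₂ r : CoalRanking X, IsBottomAlignedSum r r₁ r₂ → ConsistentAt R r₁ r₂ r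

/-- II-concatenation consistency. -/
def IICCON [DecidableEq X] (R : SRSMap X) : Prop :=
  ∀ r₁ r₂ r : CoalRanking X, IsConcatSum r r₁ r₂ →
    ∀ x y : X, Ind R r₁ x y → Ind R r₂ x y → Ind R r x y

/-- IP-concatenation consistency. -/
def IPCCON [DecidableEq X] (R : SRSMap X) : Prop :=
  ∀ r₁ r₂ r : CoalRanking X, IsConcatSum r r₁ r₂ →
    ∀ x y : X, Ind R r₁ x y → Pref R r₂ x y → Pref R r x y

/-- PI-concatenation consistency. -/
def PICCON [DecidableEq X] (R : SRSMap X) : Prop :=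
  ∀ r₁ r₂ r : CoalRanking X, IsConcatSum r r₁ r₂ →
    ∀ x y : X, Pref R r₁ x y → Ind R r₂ x y → Pref R r x y

/-- PP-concatenation consistency. -/
def PPCCON [DecidableEq X] (R : SRSMap X) : Prop :=
  ∀ r₁ r₂ r : CoalRanking X, IsConcatSum r r₁ r₂ →
    ∀ x y : X, Pref R r₁ x y → Pref R r₂ x y → Pref R r x y

/-- `x_k`: the number of coalitions of the class `C` containing `x`. -/
def cnt [DecidableEq X] (x : X) (C : Finset (Finset X)) : ℕ :=
  (C.filter (fun S => x ∈ S)).card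

/-- The vector `θ_≿(x) = (x₁, …, x_l)`. -/
def theta [DecidableEq X] (r : CoalRanking X) (x : X) : List ℕ :=
  r.classes.map (cnt x)

/-- `sign`: `1` on positive numbers, `0` otherwise. -/
def sgn (n : ℕ) : ℕ := if 0 < n then 1 else 0

/-- The vector `θ̇_≿(x) = (sign(x₁), …, sign(x_l))`. -/
def thetaDot [DecidableEq X] (r : CoalRanking X) (x : X) : List ℕ :=
  (theta r x).map sgn

/-- The lexicographic order `≥^L` on vectors (of equal length). -/
def lexGE : List ℕ → List ℕ → Prop
  | _, [] => True
  | [], _ :: _ => False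
  | a :: as, b :: bs => b < a ∨ (a = b ∧ lexGE as bs)

/-- The lexicographic excellence solution (lex-cel) `R^L`. -/
def lexcel [DecidableEq X] : SRSMap X := fun r x y => lexGE (theta r x) (theta r y)

/-- The sign lexicographic excellence solution (S lex-cel) `R^{SL}`. -/
def slexcel [DecidableEq X] : SRSMap X := fun r x y => lexGE (thetaDot r x) (thetaDot r y)

/-- The plurality solution `R^P`. -/
def plurality [DecidableEq X] : SRSMap X := fun r x y =>
  (theta r y).headD 0 ≤ (theta r x).headD 0

/-- The sign plurality solution `R^{SP}`. -/
def splurality [DecidableEq X] : SRSMap X := fun r x y =>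
  sgn ((theta r y).headD 0) ≤ sgn ((theta r x).headD 0)

/-- The anti-plurality solution `R^{AP}`. -/
def antiplurality [DecidableEq X] : SRSMap X := fun r x y =>
  (theta r x).getLastD 0 ≤ (theta r y).getLastD 0

/-- `e_≿(x)`: the largest `k` such that `x` belongs to every coalition of each of the
first `k` equivalence classes. -/
def eIIS [DecidableEq X] (r : CoalRanking X) (x : X) : ℕ :=
  (r.classes.takeWhile (fun C => decide (∀ S ∈ C, x ∈ S))).length

/-- The intersection initial segment solution (IIS) `R^{IIS}`. -/
def iis [DecidableEq X] : SRSMap X := fun r x y => eIIS r y ≤ eIIS r x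

/-- The index of the equivalence class a coalition belongs to. -/
def classIdx [DecidableEq X] (r : CoalRanking X) (S : Finset X) : ℕ :=
  r.classes.findIdx (fun C => decide (S ∈ C))

/-- `C_{xy}`: the number of CP comparisons in favour of `x` against `y`. -/
def cpCount [DecidableEq X] [Fintype X] (r : CoalRanking X) (x y : X) : ℕ :=
  ((Finset.univ : Finset (Finset X)).filter (fun S =>
    S.Nonempty ∧ x ∉ S ∧ y ∉ S ∧ insert x S ∈ r.domain ∧ insert y S ∈ r.domain ∧
    classIdx r (insert x S) < classIdx r (insert y S))).card

/-- The Ceteris Paribus majority solution `R^{CPM}`. -/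
def cpm [DecidableEq X] [Fintype X] : SRSMap X := fun r x y =>
  cpCount r y x ≤ cpCount r x y

/-- Neutrality (NT). -/
def NT [DecidableEq X] (R : SRSMap X) : Prop :=
  ∀ (σ : Equiv.Perm X) (r : CoalRanking X) (x y : X),
    R (r.mapPerm σ) (σ x) (σ y) ↔ R r x y

/-- Weak coalitional anonymity (WCA). -/
def WCA [DecidableEq X] (R : SRSMap X) : Prop :=
  ∀ (x y : X) (π : Equiv.Perm (Finset X))
    (hπ : ∀ S : Finset X, S.Nonempty → (π S).Nonempty),
    (∀ S : Finset X, x ∈ S → x ∈ π S) → (∀ S : Finset X, y ∈ S → y ∈ π S) →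
    ∀ r : CoalRanking X,
      (R (r.mapCoalPerm π hπ) x y ↔ R r x y) ∧ (R (r.mapCoalPerm π hπ) y x ↔ R r y x)

/-- The weak union very important person property (WUVIP). -/
def WUVIP (R : SRSMap X) : Prop :=
  ∀ (r : CoalRanking X) (A B : Finset (Finset X)), r.classes = [A, B] →
    ∀ x y : X, (∃ S ∈ A, x ∈ S) → (∀ S ∈ A, y ∉ S) → Pref R r x y

/-- All indifference all winners (AIAW). -/
def AIAW [DecidableEq X] (R : SRSMap X) : Prop :=
  ∀ r : CoalRanking X, r.classes.length ≤ 1 →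
    (∀ x y : X, (∃ S ∈ r.domain, x ∈ S) → (∃ S ∈ r.domain, y ∈ S) → Ind R r x y) ∧
    (∀ x z : X, (∃ S ∈ r.domain, x ∈ S) → (∀ S ∈ r.domain, z ∉ S) → Pref R r x z)

/-- Independence of the decomposition of the worst sets (IDWS). -/
def IDWS [DecidableEq X] (R : SRSMap X) : Prop :=
  ∀ (r r' : CoalRanking X) (L G : List (Finset (Finset X))) (W : Finset (Finset X)),
    L ≠ [] → r.classes = L ++ [W] → r'.classes = L ++ G →
    G.foldr (· ∪ ·) ∅ = W →
    ∀ x y : X, Pref R r x y → Pref R r' x y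

/-- Independence of the addition of the worst sets (IAWS). -/
def IAWS [DecidableEq X] (R : SRSMap X) : Prop :=
  ∀ (r r' : CoalRanking X) (G : Finset (Finset X)),
    r'.classes = r.classes ++ [G] → (∀ S ∈ G, S ∉ r.domain) →
    ∀ x y : X, Pref R r x y → Pref R r' x y

/-- Tops-only (TO). -/
def TO (R : SRSMap X) : Prop :=
  ∀ (r r' : CoalRanking X) (A : Finset (Finset X)),
    r.classes.head? = some A → r'.classes.head? = some A → R r = R r'

/-- The dual S lex-cel `R^{DSL}`. -/
def dslexcel [DecidableEq X] : SRSMap X := fun r x y =>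
  lexGE ((thetaDot r y).reverse) ((thetaDot r x).reverse)

/-- The inverse dual S lex-cel `R^{IDSL}`. -/
def idslexcel [DecidableEq X] : SRSMap X := fun r x y => dslexcel r y x

/-- The vector `θ̃_≿(x)` used by the S lex-cel with precedence on unanimity. -/
def tildeTheta [DecidableEq X] (r : CoalRanking X) (x : X) : List ℕ :=
  r.classes.map (fun C => if cnt x C = C.card then 2 else if 0 < cnt x C then 1 else 0)

/-- The S lex-cel with a particular precedence on unanimity `R^{SLUN}`. -/
def slun [DecidableEq X] : SRSMap X := fun r x y =>
  lexGE (tildeTheta r x) (tildeTheta r y)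

/-- The S sum score `Σ_k sign(x_k)`. -/
def ssum [DecidableEq X] (r : CoalRanking X) (x : X) : ℕ := (thetaDot r x).sum

/-- The S sum rule with tie-breaking by S lex-cel `R^{SSUM,SL}`. -/
def ssumSL [DecidableEq X] : SRSMap X := fun r x y =>
  ssum r y < ssum r x ∨ (ssum r x = ssum r y ∧ slexcel r x y)

end SocRank

open SocRank

/-!
S lex-cel satisfies IDWS: splitting the bottom class only affects the last coordinate of `θ̇`, and
a strict comparison decided there (`x` meets the bottom class, `y` does not) is decided again at
the first part of the split that `x` meets.

Conversely, cutting a ranking into its top class and the rest, CCON reduces `R = R^SL` to one class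
at a time. On a single class, equal signs give indifference: by AIAW if both individuals occur, by
neutrality (swapping them) if neither does. If `x` occurs in the top class and `y` does not, and
both occur further down, AIAW and CCON give `x ≻ y` for the ranking with all lower classes merged,
and IDWS carries this over to the ranking itself. This can always be arranged: if the coalition
`{x, y}` is not ranked, append it as a new bottom class; `x` and `y` tie on it, so CCON transfers
the preference back.
-/

namespace SocRank

def lexGT (a b : List ℕ) : Prop := lexGE a b ∧ ¬ lexGE b a

theorem lexGE_refl : ∀ a : List ℕ, lexGE a a
  | [] => trivial
  | _ :: as => Or.inr ⟨rfl, lexGE_refl as⟩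

theorem lexGE_antisymm : ∀ a b : List ℕ, lexGE a b → lexGE b a → a = b
  | [], [], _, _ => rfl
  | [], _ :: _, h, _ => h.elim
  | _ :: _, [], _, h => h.elim
  | a :: as, b :: bs, hab, hba => by
    rcases hab with hab | ⟨rfl, hab⟩
    · rcases hba with hba | ⟨rfl, _⟩ <;> omega
    · rcases hba with hba | ⟨_, hba⟩
      · omega
      · rw [lexGE_antisymm as bs hab hba]

theorem lexGE_total : ∀ a b : List ℕ, a.length = b.length → lexGE a b ∨ lexGE b a
  | [], [], _ => Or.inl trivial
  | a :: as, b :: bs, h => by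
    rcases lt_trichotomy a b with hab | rfl | hab
    · exact Or.inr (Or.inl hab)
    · exact (lexGE_total as bs (by simpa using h)).imp (Or.inr ⟨rfl, ·⟩) (Or.inr ⟨rfl, ·⟩)
    · exact Or.inl (Or.inl hab)

theorem not_lexGT_nil : ¬ lexGT [] [] := fun h => h.2 trivial

theorem lexGT_cons_iff {a b : ℕ} {as bs : List ℕ} :
    lexGT (a :: as) (b :: bs) ↔ b < a ∨ a = b ∧ lexGT as bs := by
  simp only [lexGT, lexGE]
  constructor
  · rintro ⟨hb | ⟨rfl, h⟩, hn⟩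
    · exact Or.inl hb
    · exact Or.inr ⟨rfl, h, fun h' => hn (Or.inr ⟨rfl, h'⟩)⟩
  · rintro (hb | ⟨rfl, h, hn⟩)
    · exact ⟨Or.inl hb, by omega⟩
    · exact ⟨Or.inr ⟨rfl, h⟩, by rintro (h' | ⟨-, h'⟩) <;> [omega; exact hn h']⟩

theorem lexGT_singleton_iff {a b : ℕ} : lexGT [a] [b] ↔ b < a := by
  simp [lexGT_cons_iff, not_lexGT_nil]

theorem lexGT_append_iff {as bs cs ds : List ℕ} (h : as.length = bs.length) :
    lexGT (as ++ cs) (bs ++ ds) ↔ lexGT as bs ∨ as = bs ∧ lexGT cs ds := by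
  induction as generalizing bs with
  | nil =>
    obtain rfl := List.eq_nil_of_length_eq_zero h.symm
    simp [not_lexGT_nil]
  | cons a as ih =>
    obtain _ | ⟨b, bs⟩ := bs
    · simp at h
    simp only [List.cons_append, lexGT_cons_iff, ih (Nat.succ_injective h), List.cons.injEq]
    tauto

theorem lexGT_map_of_forall_eq_zero {α : Type*} {f g : α → ℕ} :
    ∀ {l : List α}, (∀ a ∈ l, g a = 0) → (∃ a ∈ l, 0 < f a) → lexGT (l.map f) (l.map g)
  | [], _, ⟨_, h, _⟩ => absurd h List.not_mem_nil
  | a :: l, hg, hf => by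
    rw [List.map_cons, List.map_cons, lexGT_cons_iff, hg a List.mem_cons_self]
    by_cases ha : 0 < f a
    · exact Or.inl ha
    refine Or.inr ⟨by omega, lexGT_map_of_forall_eq_zero (fun b hb => hg b (.tail a hb)) ?_⟩
    obtain ⟨b, hb, hfb⟩ := hf
    rcases List.mem_cons.1 hb with rfl | hb
    · exact absurd hfb ha
    · exact ⟨b, hb, hfb⟩

theorem sgn_pos_iff {n : ℕ} : 0 < sgn n ↔ 0 < n := by
  unfold sgn; split_ifs <;> omega

theorem sgn_eq_zero_iff {n : ℕ} : sgn n = 0 ↔ n = 0 := by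
  unfold sgn; split_ifs <;> simp <;> omega

theorem sgn_eq_one_iff {n : ℕ} : sgn n = 1 ↔ 0 < n := by
  unfold sgn; split_ifs <;> simp <;> omega

theorem sgn_lt_sgn_iff {m n : ℕ} : sgn m < sgn n ↔ m = 0 ∧ 0 < n := by
  unfold sgn; split_ifs <;> omega

theorem cnt_pos_iff {X : Type*} [DecidableEq X] {x : X} {C : Finset (Finset X)} :
    0 < cnt x C ↔ ∃ S ∈ C, x ∈ S := by
  simp [cnt, Finset.card_pos, Finset.filter_nonempty_iff]

theorem cnt_eq_zero_iff {X : Type*} [DecidableEq X] {x : X} {C : Finset (Finset X)} :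
    cnt x C = 0 ↔ ∀ S ∈ C, x ∉ S := by
  simp [cnt, Finset.filter_eq_empty_iff]

theorem _root_.Finset.image_swap_eq_self {X : Type*} [DecidableEq X] {x y : X} {S : Finset X}
    (h : x ∈ S ↔ y ∈ S) : S.image (Equiv.swap x y) = S := by
  have hmaps : ∀ a ∈ S, Equiv.swap x y a ∈ S := by
    intro a ha
    rw [Equiv.swap_apply_def]
    split_ifs with hax hay
    · exact h.1 (hax ▸ ha)
    · exact h.2 (hay ▸ ha)
    · exact ha
  exact Finset.eq_of_subset_of_card_le (Finset.image_subset_iff.2 hmaps)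
    (Finset.card_image_of_injective _ (Equiv.injective _)).ge

namespace CoalRanking

variable {X : Type*}

theorem ext_classes {r s : CoalRanking X} (h : r.classes = s.classes) : r = s := by
  cases r; cases s; cases h; rfl

protected def take (r : CoalRanking X) (n : ℕ) : CoalRanking X where
  classes := r.classes.take n
  class_nonempty C hC := r.class_nonempty C (List.mem_of_mem_take hC)
  coal_nonempty C hC := r.coal_nonempty C (List.mem_of_mem_take hC)
  classes_disjoint := r.classes_disjoint.sublist (List.take_sublist n _)

protected def drop (r : CoalRanking X) (n : ℕ) : CoalRanking X where
  classes := r.classes.drop n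
  class_nonempty C hC := r.class_nonempty C (List.mem_of_mem_drop hC)
  coal_nonempty C hC := r.coal_nonempty C (List.mem_of_mem_drop hC)
  classes_disjoint := r.classes_disjoint.sublist (List.drop_sublist n _)

def ofClass (C : Finset (Finset X)) (hC : C.Nonempty) (hS : ∀ S ∈ C, S.Nonempty) :
    CoalRanking X where
  classes := [C]
  class_nonempty _ h := List.mem_singleton.1 h ▸ hC
  coal_nonempty _ h := List.mem_singleton.1 h ▸ hS
  classes_disjoint := List.pairwise_singleton _ _

@[simp] theorem classes_take (r : CoalRanking X) (n : ℕ) :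
    (r.take n).classes = r.classes.take n := rfl

@[simp] theorem classes_drop (r : CoalRanking X) (n : ℕ) :
    (r.drop n).classes = r.classes.drop n := rfl

@[simp] theorem classes_ofClass {C : Finset (Finset X)} (hC : C.Nonempty)
    (hS : ∀ S ∈ C, S.Nonempty) : (ofClass C hC hS).classes = [C] := rfl

variable [DecidableEq X]

theorem mem_foldr_union {l : List (Finset (Finset X))} {S : Finset X} :
    S ∈ l.foldr (· ∪ ·) ∅ ↔ ∃ C ∈ l, S ∈ C := by
  induction l with
  | nil => simp
  | cons C l ih => simp [ih]

theorem mem_domain {r : CoalRanking X} {S : Finset X} :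
    S ∈ r.domain ↔ ∃ C ∈ r.classes, S ∈ C := mem_foldr_union

theorem subset_domain {r : CoalRanking X} {C : Finset (Finset X)} (hC : C ∈ r.classes) :
    C ⊆ r.domain := fun _ hS => mem_domain.2 ⟨C, hC, hS⟩

theorem mem_domain_iff_take_or_drop {r : CoalRanking X} {S : Finset X} (n : ℕ) :
    S ∈ r.domain ↔ S ∈ (r.take n).domain ∨ S ∈ (r.drop n).domain := by
  simp only [mem_domain, classes_take, classes_drop, ← exists_or, ← or_and_right,
    ← List.mem_append, List.take_append_drop]

@[simp] theorem domain_ofClass {C : Finset (Finset X)} (hC : C.Nonempty)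
    (hS : ∀ S ∈ C, S.Nonempty) : (ofClass C hC hS).domain = C := by
  simp [domain, ofClass]

def concat (r₁ r₂ : CoalRanking X) (h : Disjoint r₁.domain r₂.domain) : CoalRanking X where
  classes := r₁.classes ++ r₂.classes
  class_nonempty C hC := (List.mem_append.1 hC).elim (r₁.class_nonempty C) (r₂.class_nonempty C)
  coal_nonempty C hC := (List.mem_append.1 hC).elim (r₁.coal_nonempty C) (r₂.coal_nonempty C)
  classes_disjoint := List.pairwise_append.2 ⟨r₁.classes_disjoint, r₂.classes_disjoint,
    fun _ hA _ hB => h.mono (subset_domain hA) (subset_domain hB)⟩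

theorem isConcatSum_concat {r₁ r₂ : CoalRanking X} (h : Disjoint r₁.domain r₂.domain) :
    IsConcatSum (r₁.concat r₂ h) r₁ r₂ := ⟨h, rfl⟩

theorem disjoint_domain_take_drop (r : CoalRanking X) (n : ℕ) :
    Disjoint (r.take n).domain (r.drop n).domain := by
  rw [Finset.disjoint_left]
  intro S hS₁ hS₂
  obtain ⟨A, hA, hSA⟩ := mem_domain.1 hS₁
  obtain ⟨B, hB, hSB⟩ := mem_domain.1 hS₂
  have hdisj := r.classes_disjoint
  rw [← List.take_append_drop n r.classes, List.pairwise_append] at hdisj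
  exact Finset.disjoint_left.1 (hdisj.2.2 A hA B hB) hSA hSB

theorem isConcatSum_take_drop (r : CoalRanking X) (n : ℕ) :
    IsConcatSum r (r.take n) (r.drop n) :=
  ⟨disjoint_domain_take_drop r n, (List.take_append_drop n _).symm⟩

end CoalRanking

open CoalRanking

variable {X : Type*}

theorem eq_of_ind_imp_of_pref_imp {R Q : SRSMap X} (hQ : ∀ r x y, Q r x y ∨ Q r y x)
    (hI : ∀ r x y, Ind Q r x y → Ind R r x y) (hP : ∀ r x y, Pref Q r x y → Pref R r x y) :
    R = Q := by
  funext r x y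
  apply propext
  constructor
  · intro hR
    by_contra hQxy
    exact (hP r y x ⟨(hQ r x y).resolve_left hQxy, hQxy⟩).2 hR
  · intro hQxy
    by_cases hQyx : Q r y x
    · exact (hI r x y ⟨hQxy, hQyx⟩).1
    · exact (hP r x y ⟨hQxy, hQyx⟩).1

variable [DecidableEq X]

theorem thetaDot_eq_map (r : CoalRanking X) (x : X) :
    thetaDot r x = r.classes.map (fun C => sgn (cnt x C)) := by
  simp [thetaDot, theta]

theorem length_thetaDot (r : CoalRanking X) (x : X) :
    (thetaDot r x).length = r.classes.length := by
  simp [thetaDot_eq_map]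

theorem thetaDot_take_append_drop (r : CoalRanking X) (n : ℕ) (x : X) :
    thetaDot (r.take n) x ++ thetaDot (r.drop n) x = thetaDot r x := by
  simp only [thetaDot_eq_map, classes_take, classes_drop, ← List.map_append,
    List.take_append_drop]

theorem one_mem_thetaDot_iff {r : CoalRanking X} {x : X} :
    1 ∈ thetaDot r x ↔ ∃ S ∈ r.domain, x ∈ S := by
  simp only [thetaDot_eq_map, List.mem_map, sgn_eq_one_iff, cnt_pos_iff, mem_domain]
  aesop

theorem mem_domain_of_lexGT_thetaDot {r : CoalRanking X} {x y : X}
    (hr : r.classes.length ≤ 1) (h : lexGT (thetaDot r x) (thetaDot r y)) :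
    (∃ S ∈ r.domain, x ∈ S) ∧ ∀ S ∈ r.domain, y ∉ S := by
  rcases hc : r.classes with _ | ⟨C, _ | ⟨_, _⟩⟩
  · simp [thetaDot_eq_map, hc, not_lexGT_nil] at h
  · simp only [thetaDot_eq_map, hc, List.map_cons, List.map_nil, lexGT_singleton_iff,
      sgn_lt_sgn_iff, cnt_eq_zero_iff, cnt_pos_iff] at h
    simpa [mem_domain, hc] using h.symm
  · simp [hc] at hr

theorem ind_slexcel_iff {r : CoalRanking X} {x y : X} :
    Ind slexcel r x y ↔ thetaDot r x = thetaDot r y :=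
  ⟨fun h => lexGE_antisymm _ _ h.1 h.2, fun h => by
    simp only [Ind, slexcel, h, and_self]; exact lexGE_refl _⟩

theorem slexcel_total (r : CoalRanking X) (x y : X) : slexcel r x y ∨ slexcel r y x :=
  lexGE_total _ _ (by simp [length_thetaDot])

theorem idws_slexcel : IDWS (slexcel : SRSMap X) := by
  intro r r' L G W _ hr hr' hG x y h
  change lexGT _ _ at h ⊢
  simp only [thetaDot_eq_map, hr, hr', List.map_append, List.map_singleton] at h ⊢
  rcases (lexGT_append_iff (by simp)).1 h with hL | ⟨hLeq, hW⟩
  · exact (lexGT_append_iff (by simp)).2 (Or.inl hL)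
  refine (lexGT_append_iff (by simp)).2 (Or.inr ⟨hLeq, ?_⟩)
  rw [lexGT_singleton_iff, sgn_lt_sgn_iff, cnt_eq_zero_iff, cnt_pos_iff] at hW
  obtain ⟨hyW, Sx, hSx, hxSx⟩ := hW
  obtain ⟨C, hC, hSC⟩ := mem_foldr_union.1 (hG ▸ hSx)
  refine lexGT_map_of_forall_eq_zero (fun C hC => ?_)
    ⟨C, hC, sgn_pos_iff.2 (cnt_pos_iff.2 ⟨Sx, hSC, hxSx⟩)⟩
  exact sgn_eq_zero_iff.2 <| cnt_eq_zero_iff.2 fun S hS =>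
    hyW S (hG ▸ mem_foldr_union.2 ⟨C, hC, hS⟩)

theorem pref_of_pref_take_of_mem_drop {R : SRSMap X} (hAIAW : AIAW R) (hCCON : CCON R)
    (hIDWS : IDWS R) {r : CoalRanking X} {n : ℕ} (hn : 0 < n) {x y : X}
    (hP : Pref R (r.take n) x y) (hx : ∃ S ∈ (r.drop n).domain, x ∈ S)
    (hy : ∃ S ∈ (r.drop n).domain, y ∈ S) : Pref R r x y := by
  have hW : (r.drop n).domain.Nonempty := let ⟨S, hS, _⟩ := hx; ⟨S, hS⟩
  have hS : ∀ S ∈ (r.drop n).domain, S.Nonempty := fun S hS =>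
    let ⟨C, hC, hSC⟩ := mem_domain.1 hS
    (r.drop n).coal_nonempty C hC S hSC
  have hI : Ind R (ofClass _ hW hS) x y :=
    (hAIAW _ (by simp)).1 x y (by simpa using hx) (by simpa using hy)
  have hdisj : Disjoint (r.take n).domain (ofClass _ hW hS).domain := by
    simpa using disjoint_domain_take_drop r n
  have hm : Pref R ((r.take n).concat _ hdisj) x y :=
    (hCCON _ _ _ (isConcatSum_concat hdisj) x y).2.2.1 hP hI
  have htop : r.classes.take n ≠ [] := by
    rw [Ne, List.take_eq_nil_iff]
    rintro (h0 | hr)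
    · omega
    · simp [domain, hr] at hW
  exact hIDWS _ r _ _ _ htop rfl (List.take_append_drop n _).symm rfl x y hm

section Complete

variable {R : SRSMap X} (hcomp : ∀ r x y, R r x y ∨ R r y x)
include hcomp

theorem NT.ind_of_forall_mem_iff (hNT : NT R) {r : CoalRanking X} {x y : X}
    (h : ∀ C ∈ r.classes, ∀ S ∈ C, x ∈ S ↔ y ∈ S) : Ind R r x y := by
  have hfix : r.mapPerm (Equiv.swap x y) = r := by
    refine ext_classes (List.map_congr_left (fun C hC => ?_) |>.trans r.classes.map_id)
    exact (Finset.image_congr fun S hS => Finset.image_swap_eq_self (h C hC S hS)).trans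
      Finset.image_id
  have hswap := hNT (Equiv.swap x y) r x y
  rw [hfix, Equiv.swap_apply_left, Equiv.swap_apply_right] at hswap
  exact (hcomp r x y).elim (fun hxy => ⟨hxy, hswap.2 hxy⟩) (fun hyx => ⟨hswap.1 hyx, hyx⟩)

theorem CCON.pref_left_of_ind_right (hCCON : CCON R) {r r₁ r₂ : CoalRanking X} {x y : X}
    (hr : IsConcatSum r r₁ r₂) (hI : Ind R r₂ x y) (hP : Pref R r x y) : Pref R r₁ x y := by
  have hyx : ¬ R r₁ y x := fun hyx => hP.2 <| by
    by_cases hxy : R r₁ x y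
    · exact ((hCCON _ _ _ hr x y).1 ⟨hxy, hyx⟩ hI).2
    · exact ((hCCON _ _ _ hr y x).2.2.1 ⟨hyx, hxy⟩ ⟨hI.2, hI.1⟩).1
  exact ⟨(hcomp r₁ x y).resolve_right hyx, hyx⟩

theorem ind_of_thetaDot_eq_of_length_le_one (hNT : NT R) (hAIAW : AIAW R)
    {r : CoalRanking X} {x y : X} (hr : r.classes.length ≤ 1)
    (h : thetaDot r x = thetaDot r y) : Ind R r x y := by
  by_cases hx : ∃ S ∈ r.domain, x ∈ S
  · exact (hAIAW r hr).1 x y hx (one_mem_thetaDot_iff.1 (h ▸ one_mem_thetaDot_iff.2 hx))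
  have hy : ¬ ∃ S ∈ r.domain, y ∈ S := by
    rwa [← one_mem_thetaDot_iff, ← h, one_mem_thetaDot_iff]
  refine hNT.ind_of_forall_mem_iff hcomp fun C hC S hS => ?_
  exact iff_of_false (fun hxS => hx ⟨S, subset_domain hC hS, hxS⟩)
    (fun hyS => hy ⟨S, subset_domain hC hS, hyS⟩)

theorem ind_of_thetaDot_eq (hNT : NT R) (hAIAW : AIAW R) (hCCON : CCON R)
    {r : CoalRanking X} {x y : X} (h : thetaDot r x = thetaDot r y) : Ind R r x y := by
  induction hn : r.classes.length generalizing r with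
  | zero => exact ind_of_thetaDot_eq_of_length_le_one hcomp hNT hAIAW (by omega) h
  | succ n ih =>
    rw [← thetaDot_take_append_drop r 1, ← thetaDot_take_append_drop r 1 y] at h
    obtain ⟨htop, hrest⟩ := List.append_inj h (by simp only [length_thetaDot])
    exact (hCCON _ _ _ (isConcatSum_take_drop r 1) x y).1
      (ind_of_thetaDot_eq_of_length_le_one hcomp hNT hAIAW (by simp) htop)
      (ih hrest (by simp [hn]))

theorem pref_of_mem_domain_take_one (hAIAW : AIAW R) (hCCON : CCON R) (hIDWS : IDWS R)
    {r : CoalRanking X} {x y : X} (hx : ∃ S ∈ (r.take 1).domain, x ∈ S)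
    (hy : ∀ S ∈ (r.take 1).domain, y ∉ S) : Pref R r x y := by
  have hxy : ({x, y} : Finset X) ∉ (r.take 1).domain := fun h => hy _ h (by simp)
  have hPtop : Pref R (r.take 1) x y := (hAIAW _ (by simp)).2 x y hx hy
  by_cases hmem : {x, y} ∈ r.domain
  · have hrest := ((mem_domain_iff_take_or_drop 1).1 hmem).resolve_left hxy
    exact pref_of_pref_take_of_mem_drop hAIAW hCCON hIDWS one_pos hPtop
      ⟨_, hrest, by simp⟩ ⟨_, hrest, by simp⟩
  set pair := ofClass {{x, y}} (by simp) (by simp)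
  have hdisj : Disjoint r.domain pair.domain := by simpa [pair] using hmem
  set p := r.concat pair hdisj
  have hI : Ind R pair x y := (hAIAW pair (by simp [pair])).1 x y
    ⟨{x, y}, by simp [pair], by simp⟩ ⟨{x, y}, by simp [pair], by simp⟩
  have hne : r.classes ≠ [] := by
    rintro hr
    simp [domain, hr] at hx
  have htop : p.take 1 = r.take 1 :=
    ext_classes (List.take_append_of_le_length (List.length_pos_of_ne_nil hne))
  have hrest : {x, y} ∈ (p.drop 1).domain := by
    have hmem' : {x, y} ∈ p.domain := mem_domain.2 ⟨{{x, y}}, by simp [p, concat, pair], by simp⟩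
    exact ((mem_domain_iff_take_or_drop 1).1 hmem').resolve_left (htop ▸ hxy)
  have hp : Pref R p x y := pref_of_pref_take_of_mem_drop hAIAW hCCON hIDWS one_pos
    (htop ▸ hPtop) ⟨_, hrest, by simp⟩ ⟨_, hrest, by simp⟩
  exact hCCON.pref_left_of_ind_right hcomp (isConcatSum_concat hdisj) hI hp

theorem pref_of_pref_slexcel (hNT : NT R) (hAIAW : AIAW R) (hCCON : CCON R) (hIDWS : IDWS R)
    {r : CoalRanking X} {x y : X} (h : Pref slexcel r x y) : Pref R r x y := by
  change lexGT _ _ at h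
  induction hn : r.classes.length generalizing r with
  | zero => simp [thetaDot_eq_map, List.length_eq_zero_iff.1 hn, not_lexGT_nil] at h
  | succ n ih =>
    rw [← thetaDot_take_append_drop r 1, ← thetaDot_take_append_drop r 1 y,
      lexGT_append_iff (by simp only [length_thetaDot])] at h
    rcases h with htop | ⟨htop, hrest⟩
    · obtain ⟨hx, hy⟩ := mem_domain_of_lexGT_thetaDot (by simp) htop
      exact pref_of_mem_domain_take_one hcomp hAIAW hCCON hIDWS hx hy
    · exact (hCCON _ _ _ (isConcatSum_take_drop r 1) x y).2.1
        (ind_of_thetaDot_eq_of_length_le_one hcomp hNT hAIAW (by simp) htop)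
        (ih hrest (by simp [hn]))

end Complete

end SocRank

theorem slexcel_characterization_idws_general {X : Type*} [DecidableEq X] (R : SRSMap X)
    (hcomp : ∀ (r : CoalRanking X) (x y : X), R r x y ∨ R r y x)
    (hNT : NT R) (hCCON : CCON R) (hAIAW : AIAW R) :
    IDWS R ↔ R = slexcel := by
  refine ⟨fun hIDWS => ?_, fun h => h ▸ idws_slexcel⟩
  refine eq_of_ind_imp_of_pref_imp slexcel_total (fun r x y h => ?_) (fun r x y h => ?_)
  · exact ind_of_thetaDot_eq hcomp hNT hAIAW hCCON (ind_slexcel_iff.1 h)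
  · exact pref_of_pref_slexcel hcomp hNT hAIAW hCCON hIDWS h

/-- for an SRS satisfying NT, CCON and AIAW, IDWS holds iff the SRS
is the S lex-cel. -/
theorem slexcel_characterization_idws {X : Type*} [DecidableEq X] [Fintype X]
    (hX : 3 ≤ Fintype.card X) (R : SRSMap X)
    (hrefl : ∀ (r : CoalRanking X) (x : X), R r x x)
    (hcomp : ∀ (r : CoalRanking X) (x y : X), R r x y ∨ R r y x)
    (hNT : NT R) (hCCON : CCON R) (hAIAW : AIAW R) :
    IDWS R ↔ R = slexcel :=
  slexcel_characterization_idws_general R hcomp hNT hCCON hAIAW
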